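/- Let Ψ_m and Ψ_n be the groupoids of m-element and n-element sets with bijections, each mapped into the groupoid E of finite sets. Their inner product groupoid ⟨Ψ_m, Ψ_n⟩ (the weak pullback over E) has groupoid cardinality 1/n! if m = n, and 0 if m ≠ n. -/

import Mathlib

open CategoryTheory

/-- Groupoid cardinality: the sum over isomorphism classes of the reciprocals of the
orders of the automorphism groups, valued in `[0,∞]`. -/
noncomputable def groupoidCard (C : Type*) [Category C] : ENNReal :=
  ∑' c : Quotient (CategoryTheory.isIsomorphicSetoid C),
    ((Nat.card (Aut (Quotient.out c)) : ENNReal))⁻¹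

/-- The weak pullback of `v : Φ ⥤ X` and `w : Ψ ⥤ X`: objects are triples `(a, b, α)`
with `a ∈ Φ`, `b ∈ Ψ` and `α : v(a) ≅ w(b)`. -/
structure WeakPullback {Φ Ψ X : Type*} [Category Φ] [Category Ψ] [Category X]
    (v : Φ ⥤ X) (w : Ψ ⥤ X) where
  a : Φ
  b : Ψ
  α : v.obj a ≅ w.obj b

/-- Morphisms in the weak pullback are pairs of morphisms making the evident square
commute. -/
instance {Φ Ψ X : Type*} [Category Φ] [Category Ψ] [Category X]
    (v : Φ ⥤ X) (w : Ψ ⥤ X) : Category (WeakPullback v w) where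
  Hom P Q := { fg : (P.a ⟶ Q.a) × (P.b ⟶ Q.b) //
      P.α.hom ≫ w.map fg.2 = v.map fg.1 ≫ Q.α.hom }
  id P := ⟨(𝟙 _, 𝟙 _), by simp⟩
  comp {P Q R} f g := ⟨(f.1.1 ≫ g.1.1, f.1.2 ≫ g.1.2), by
    simp only [Functor.map_comp, Category.assoc]
    rw [reassoc_of% f.2, g.2]⟩
  id_comp f := Subtype.ext (Prod.ext (Category.id_comp _) (Category.id_comp _))
  comp_id f := Subtype.ext (Prod.ext (Category.comp_id _) (Category.comp_id _))
  assoc f g h := Subtype.ext (Prod.ext (Category.assoc _ _ _) (Category.assoc _ _ _))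

/-- The groupoid `E` of finite sets and bijections. -/
def FinSetGrpd := Core FintypeCat

instance : Groupoid FinSetGrpd := inferInstanceAs (Groupoid (Core FintypeCat))

/-- The groupoid `Ψ_n` of `n`-element sets and bijections, a full subcategory of
the groupoid of finite sets. -/
def PsiGrpd (n : ℕ) :=
  ObjectProperty.FullSubcategory (fun S : FinSetGrpd => Nat.card ((Core.inclusion FintypeCat).obj S) = n)

instance (n : ℕ) : Category (PsiGrpd n) :=
  inferInstanceAs (Category (ObjectProperty.FullSubcategory _))

/-- The inclusion `v : Ψ_n → E`. -/
def psiIncl (n : ℕ) : PsiGrpd n ⥤ FinSetGrpd :=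
  ObjectProperty.ι _

/-! The projection `⟨Ψ_n, Ψ_n⟩ ⥤ Ψ_n` to the second factor is fully faithful, because a morphism
`(f, g)` of the weak pullback is determined by `g` through `f = α⁻¹ ∘ g ∘ α` and `Ψ_n ⥤ E` is fully
faithful. Since `Ψ_n` is connected with automorphism groups `Sₙ`, the pullback is connected too,
with automorphism groups `Sₙ`. For `m ≠ n` the pullback is empty, as `α` would be a bijection
between an `m`-element and an `n`-element set. -/

lemma groupoidCard_eq_zero_of_isEmpty (C : Type*) [Category C] [IsEmpty C] :
    groupoidCard C = 0 := by
  have : IsEmpty (Quotient (isIsomorphicSetoid C)) := Quotient.instIsEmpty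
  exact tsum_empty

lemma groupoidCard_eq_inv_card_aut {C : Type*} [Category C] (x : C)
    (hx : ∀ y : C, Nonempty (x ≅ y)) :
    groupoidCard C = (Nat.card (Aut x) : ENNReal)⁻¹ := by
  have : Subsingleton (Quotient (isIsomorphicSetoid C)) :=
    ⟨Quotient.ind₂ fun y z => Quotient.sound ⟨(hx y).some.symm ≪≫ (hx z).some⟩⟩
  rw [groupoidCard, tsum_eq_single ⟦x⟧ fun c hc => (hc (Subsingleton.elim _ _)).elim,
    Nat.card_congr (hx _).some.conjAut.toEquiv]

namespace WeakPullback

variable {Φ Ψ X : Type*} [Category Φ] [Category Ψ] [Category X]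

def snd (v : Φ ⥤ X) (w : Ψ ⥤ X) : WeakPullback v w ⥤ Ψ where
  obj P := P.b
  map f := f.1.2

variable {v : Φ ⥤ X} {w : Ψ ⥤ X}

def fullyFaithfulSnd (hv : v.FullyFaithful) : (snd v w).FullyFaithful where
  preimage {P Q} (g : P.b ⟶ Q.b) := ⟨(hv.preimage (P.α.hom ≫ w.map g ≫ Q.α.inv), g), by simp⟩
  map_preimage _ := rfl
  preimage_map {P Q} f := by
    refine Subtype.ext (Prod.ext ?_ rfl)
    have hf : P.α.hom ≫ w.map f.1.2 = v.map f.1.1 ≫ Q.α.hom := f.2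
    change hv.preimage (P.α.hom ≫ w.map f.1.2 ≫ Q.α.inv) = f.1.1
    rw [reassoc_of% hf, Iso.hom_inv_id, Category.comp_id, hv.preimage_map]

lemma groupoidCard_eq_of_fullyFaithful (hv : v.FullyFaithful) (x : WeakPullback v w)
    (hx : ∀ b : Ψ, Nonempty (x.b ≅ b)) :
    groupoidCard (WeakPullback v w) = (Nat.card (Aut x.b) : ENNReal)⁻¹ := by
  have hSnd := fullyFaithfulSnd (w := w) hv
  have hAut : Nat.card (Aut x) = Nat.card (Aut x.b) := Nat.card_congr hSnd.isoEquiv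
  rw [groupoidCard_eq_inv_card_aut x fun y => (hx y.b).map hSnd.isoEquiv.symm, hAut]

end WeakPullback

lemma FinSetGrpd.card_eq_of_hom {S T : FinSetGrpd} (f : S ⟶ T) :
    Nat.card S.of = Nat.card T.of :=
  Nat.card_congr (FintypeCat.equivEquivIso.symm f.iso)

lemma WeakPullback.eq_of_psiIncl {m n : ℕ} (P : WeakPullback (psiIncl m) (psiIncl n)) : m = n :=
  P.a.property.symm.trans ((FinSetGrpd.card_eq_of_hom P.α.hom).trans P.b.property)

def fullyFaithfulPsiIncl (n : ℕ) : (psiIncl n).FullyFaithful :=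
  ObjectProperty.fullyFaithfulι _

namespace PsiGrpd

variable {n : ℕ}

instance : Nonempty (PsiGrpd n) :=
  ⟨⟨⟨FintypeCat.of (ULift (Fin n))⟩, by simp⟩⟩

def isoOfEquiv {P Q : PsiGrpd n} (e : P.obj.of ≃ Q.obj.of) : P ≅ Q :=
  (ObjectProperty.fullyFaithfulι _).preimageIso (Core.isoMk (FintypeCat.equivEquivIso e))

lemma nonempty_iso (P Q : PsiGrpd n) : Nonempty (P ≅ Q) :=
  (Finite.card_eq.mp (P.property.trans Q.property.symm)).map isoOfEquiv

def autEquivPerm (P : PsiGrpd n) : Aut P ≃ Equiv.Perm P.obj.of :=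
  (ObjectProperty.fullyFaithfulι _).isoEquiv.trans <| (Groupoid.isoEquivHom _ _).trans <|
    (⟨CoreHom.iso, CoreHom.mk, fun _ => rfl, fun _ => rfl⟩ : (P.obj ⟶ P.obj) ≃ _).trans
      FintypeCat.equivEquivIso.symm

lemma card_aut (P : PsiGrpd n) : Nat.card (Aut P) = n.factorial := by
  rw [Nat.card_congr P.autEquivPerm, Nat.card_perm]
  exact congrArg Nat.factorial P.property

end PsiGrpd

/-- The inner product groupoid `⟨Ψ_m, Ψ_n⟩`, i.e. the weak pullback over the groupoid of
finite sets of the groupoids of `m`-element and `n`-element sets, has groupoid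
cardinality `1/n!` if `m = n` and `0` otherwise. -/
theorem groupoidCard_innerProduct_psi (m n : ℕ) :
    groupoidCard (WeakPullback (psiIncl m) (psiIncl n)) =
      if m = n then ((Nat.factorial n : ENNReal))⁻¹ else 0 := by
  split_ifs with h
  · subst h
    obtain ⟨P⟩ : Nonempty (PsiGrpd m) := inferInstance
    rw [WeakPullback.groupoidCard_eq_of_fullyFaithful (fullyFaithfulPsiIncl m) ⟨P, P, Iso.refl _⟩
      (PsiGrpd.nonempty_iso P), PsiGrpd.card_aut]
  · have : IsEmpty (WeakPullback (psiIncl m) (psiIncl n)) := ⟨fun P => h P.eq_of_psiIncl⟩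
    exact groupoidCard_eq_zero_of_isEmpty _
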